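/- Let A be a DFA with n states, P a set of compressible pairs of states with synchronizing height h(P), and p(P) the maximal length of a Frankl–Pin sequence over P. Then for every compressible m-subset M of Q (2 ≤ m ≤ n), there exists a word w compressing M (i.e., |Mw| < |M|) with |w| ≤ C(n-m+2, 2) − p(P) + h(P). -/

import Mathlib

/-!
Take a shortest word `u` that compresses `M` or maps two states of `M` onto a pair of `P`, and
two states of `M` whose images under `u` merge or form that pair. The images of `M` under the
proper prefixes of `u`, tracked at these two states, form a Frankl–Pin sequence, and by minimality
of `u` the given sequence over `P` can be appended to it. Frankl's bound then gives
`|u| + p ≤ C(n-m+2, 2)`, and synchronizing the pair costs at most `h` further letters.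
-/

/-- Action of a word on a state. -/
def actW {Q A : Type*} (δ : Q → A → Q) (q : Q) (w : List A) : Q := w.foldl δ q

/-- Image of the full state set under a word. -/
def img {Q A : Type*} [Fintype Q] [DecidableEq Q] (δ : Q → A → Q) (w : List A) : Finset Q :=
  Finset.univ.image (fun q => actW δ q w)

open Finset Polynomial

theorem Finset.card_image_lt_of_ne_of_eq {α β : Type*} [DecidableEq β] {s : Finset α}
    {f : α → β} {a b : α} (ha : a ∈ s) (hb : b ∈ s) (hab : a ≠ b) (hf : f a = f b) :
    #(s.image f) < #s :=
  card_image_le.lt_of_ne fun h => hab (injOn_of_card_image_eq h ha hb hf)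

theorem Fintype.sum_prod_eq_sum_le_add_swap {ι M : Type*} [Fintype ι] [LinearOrder ι]
    [AddCommMonoid M] (g : ι × ι → M) :
    ∑ p, g p = ∑ p : {p : ι × ι // p.1 ≤ p.2}, (g p + if p.1.1 < p.1.2 then g p.1.swap else 0) := by
  rw [← Finset.sum_subtype (univ.filter fun p : ι × ι => p.1 ≤ p.2) (by simp)
      (fun p => g p + if p.1 < p.2 then g p.swap else 0), sum_add_distrib,
    ← sum_filter, filter_filter, ← sum_filter_add_sum_filter_not univ (fun p : ι × ι => p.1 ≤ p.2)]
  congr 1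
  refine sum_nbij' Prod.swap Prod.swap ?_ ?_ ?_ ?_ ?_ <;> simp +contextual [le_of_lt]

theorem Polynomial.eval_mul_eval_eq_sum_le {R : Type*} [CommSemiring R] {f : R[X]} {N : ℕ}
    (hf : f.natDegree < N) (a b : R) :
    f.eval a * f.eval b = ∑ p : {p : Fin N × Fin N // p.1 ≤ p.2},
      f.coeff p.1.1 * f.coeff p.1.2 * (a ^ (p.1.1 : ℕ) * b ^ (p.1.2 : ℕ) +
        if p.1.1 < p.1.2 then a ^ (p.1.2 : ℕ) * b ^ (p.1.1 : ℕ) else 0) := by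
  rw [eval_eq_sum_range' hf, eval_eq_sum_range' hf, ← Fin.sum_univ_eq_sum_range,
    ← Fin.sum_univ_eq_sum_range, sum_mul_sum, ← Fintype.sum_prod_type',
    Fintype.sum_prod_eq_sum_le_add_swap]
  refine Fintype.sum_congr _ _ fun p => ?_
  simp only [Prod.fst_swap, Prod.snd_swap]
  split_ifs <;> ring

theorem Matrix.card_le_card_of_isLowerTriangular_mul {n ι K : Type*} [Fintype n] [LinearOrder n]
    [Fintype ι] [Field K] (U : Matrix n ι K) (V : Matrix ι n K)
    (hlower : (U * V).IsLowerTriangular) (hdiag : ∀ i, (U * V) i i ≠ 0) :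
    Fintype.card n ≤ Fintype.card ι := by
  have hdet : (U * V).det ≠ 0 := by
    rw [Matrix.det_of_isLowerTriangular _ hlower]
    exact prod_ne_zero_iff.mpr fun i _ => hdiag i
  calc Fintype.card n = (U * V).rank :=
        (rank_of_isUnit _ ((isUnit_iff_isUnit_det _).mpr hdet.isUnit)).symm
    _ ≤ U.rank := rank_mul_le_left U V
    _ ≤ Fintype.card ι := rank_le_card_width U

structure IsFranklPinSeq {Q : Type*} (m : ℕ) {ℓ : ℕ} (M : Fin ℓ → Finset Q) (x y : Fin ℓ → Q) :
    Prop where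
  card_eq : ∀ i, #(M i) = m
  mem : ∀ i, x i ∈ M i ∧ y i ∈ M i
  not_mem_or : ∀ i j, j < i → x i ∉ M j ∨ y i ∉ M j

namespace IsFranklPinSeq

variable {Q : Type*} {m : ℕ}

theorem append {k l : ℕ} {M₁ : Fin k → Finset Q} {x₁ y₁ : Fin k → Q} {M₂ : Fin l → Finset Q}
    {x₂ y₂ : Fin l → Q} (h₁ : IsFranklPinSeq m M₁ x₁ y₁) (h₂ : IsFranklPinSeq m M₂ x₂ y₂)
    (hcross : ∀ i j, x₂ i ∉ M₁ j ∨ y₂ i ∉ M₁ j) :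
    IsFranklPinSeq m (Fin.append M₁ M₂) (Fin.append x₁ x₂) (Fin.append y₁ y₂) where
  card_eq := Fin.addCases (by simpa using h₁.card_eq) (by simpa using h₂.card_eq)
  mem := Fin.addCases (by simpa using h₁.mem) (by simpa using h₂.mem)
  not_mem_or := by
    refine Fin.addCases (fun i => Fin.addCases (fun j hji => ?_) (fun j hji => ?_))
      (fun i => Fin.addCases (fun j _ => ?_) (fun j hji => ?_))
    · simpa using h₁.not_mem_or i j (by rw [Fin.lt_def] at hji ⊢; simpa using hji)
    · simp [Fin.lt_def] at hji
      omega
    · simpa using hcross i j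
    · simpa using h₂.not_mem_or i j (by rw [Fin.lt_def] at hji ⊢; simp at hji; omega)

/-- Frankl's bound, by the polynomial method: with `t` an injective labelling of the states by
reals and `e i` the monic polynomial vanishing exactly at the labels outside `M i`, the matrix
`e i (t (x j)) * e i (t (y j))` is lower triangular with nonzero diagonal, and it factors through
the symmetric products of monomials of degree at most `|Q| - m`. -/
theorem length_le [Fintype Q] [DecidableEq Q] {ℓ : ℕ} {M : Fin ℓ → Finset Q} {x y : Fin ℓ → Q}
    (hS : IsFranklPinSeq m M x y) : ℓ ≤ (Fintype.card Q - m + 2).choose 2 := by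
  set N := Fintype.card Q - m + 1
  let t : Q → ℝ := fun q => ((Fintype.equivFin Q q : ℕ) : ℝ)
  have ht : Function.Injective t :=
    Nat.cast_injective.comp (Fin.val_injective.comp (Fintype.equivFin Q).injective)
  let e : Fin ℓ → ℝ[X] := fun i => ∏ q ∈ (M i)ᶜ, (X - C (t q))
  have he_deg : ∀ i, (e i).natDegree < N := fun i => by
    simp [e, N, card_compl, hS.card_eq]
  have he_eval : ∀ i q, (e i).eval (t q) = 0 ↔ q ∉ M i := fun i q => by
    simp [e, eval_prod, prod_eq_zero_iff, sub_eq_zero, ht.eq_iff]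
  let U : Matrix (Fin ℓ) {p : Fin N × Fin N // p.1 ≤ p.2} ℝ :=
    Matrix.of fun i p => (e i).coeff p.1.1 * (e i).coeff p.1.2
  let V : Matrix {p : Fin N × Fin N // p.1 ≤ p.2} (Fin ℓ) ℝ :=
    Matrix.of fun p j => t (x j) ^ (p.1.1 : ℕ) * t (y j) ^ (p.1.2 : ℕ) +
      if p.1.1 < p.1.2 then t (x j) ^ (p.1.2 : ℕ) * t (y j) ^ (p.1.1 : ℕ) else 0
  have hUV : ∀ i j, (U * V) i j = (e i).eval (t (x j)) * (e i).eval (t (y j)) := fun i j => by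
    simp only [Matrix.mul_apply, eval_mul_eval_eq_sum_le (he_deg i), U, V, Matrix.of_apply,
      mul_assoc]
  have hcard : Fintype.card {p : Fin N × Fin N // p.1 ≤ p.2} = (N + 1).choose 2 := by
    rw [← Fintype.card_congr Sym2.sortEquiv, Sym2.card, Fintype.card_fin]
  simpa [hcard] using Matrix.card_le_card_of_isLowerTriangular_mul U V
    (fun i j hij => by
      rw [hUV, mul_eq_zero, he_eval, he_eval]
      exact hS.not_mem_or j i hij)
    (fun i => by
      rw [hUV, ne_eq, mul_eq_zero, he_eval, he_eval, not_or, not_not, not_not]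
      exact hS.mem i)

end IsFranklPinSeq

section Word

variable {Q A : Type*} (δ : Q → A → Q)

theorem actW_append (q : Q) (w₁ w₂ : List A) :
    actW δ q (w₁ ++ w₂) = actW δ (actW δ q w₁) w₂ :=
  List.foldl_append

variable [DecidableEq Q]

def wordImage (M : Finset Q) (w : List A) : Finset Q := M.image (actW δ · w)

theorem wordImage_append (M : Finset Q) (w₁ w₂ : List A) :
    wordImage δ M (w₁ ++ w₂) = (wordImage δ M w₁).image (actW δ · w₂) := by
  simp only [wordImage, image_image, Function.comp_def, actW_append]

theorem actW_mem_wordImage {M : Finset Q} {q : Q} (hq : q ∈ M) (w : List A) :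
    actW δ q w ∈ wordImage δ M w :=
  mem_image_of_mem _ hq

def CompressesOrCoversPair (P : Finset (Q × Q)) (M : Finset Q) (w : List A) : Prop :=
  #(wordImage δ M w) < #M ∨ ∃ z ∈ P, z.1 ∈ wordImage δ M w ∧ z.2 ∈ wordImage δ M w

variable {δ} {P : Finset (Q × Q)} {M : Finset Q}

theorem CompressesOrCoversPair.exists_pair (hP : ∀ z ∈ P, z.1 ≠ z.2) {u : List A}
    (hu : CompressesOrCoversPair δ P M u) :
    ∃ ξ ∈ M, ∃ η ∈ M, ξ ≠ η ∧ (actW δ ξ u = actW δ η u ∨ (actW δ ξ u, actW δ η u) ∈ P) := by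
  rcases hu with hlt | ⟨⟨a, b⟩, hz, hz₁, hz₂⟩
  · obtain ⟨ξ, hξ, η, hη, hne, heq⟩ := exists_ne_map_eq_of_card_image_lt hlt
    exact ⟨ξ, hξ, η, hη, hne, Or.inl heq⟩
  · obtain ⟨ξ, hξ, rfl⟩ := mem_image.mp hz₁
    obtain ⟨η, hη, rfl⟩ := mem_image.mp hz₂
    refine ⟨ξ, hξ, η, hη, ?_, Or.inr hz⟩
    rintro rfl
    exact hP _ hz rfl

section Minimal

variable {u : List A} (hmin : ∀ w, CompressesOrCoversPair δ P M w → u.length ≤ w.length)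
include hmin

theorem not_compressesOrCoversPair_take {j : ℕ} (hj : j < u.length) :
    ¬ CompressesOrCoversPair δ P M (u.take j) := fun h => by
  have := hmin _ h
  rw [List.length_take] at this
  omega

theorem card_wordImage_take {j : ℕ} (hj : j < u.length) : #(wordImage δ M (u.take j)) = #M :=
  card_image_le.eq_or_lt.resolve_right fun h => not_compressesOrCoversPair_take hmin hj (Or.inl h)

theorem not_mem_or_not_mem_wordImage_take {j : ℕ} (hj : j < u.length) {x y : Q}
    (hxy : (x, y) ∈ P ∨ (y, x) ∈ P) :
    x ∉ wordImage δ M (u.take j) ∨ y ∉ wordImage δ M (u.take j) := by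
  rw [← not_and_or]
  rintro ⟨hx, hy⟩
  exact not_compressesOrCoversPair_take hmin hj <|
    Or.inr (hxy.elim (fun h => ⟨_, h, hx, hy⟩) fun h => ⟨_, h, hy, hx⟩)

theorem actW_take_ne {ξ η : Q} (hξ : ξ ∈ M) (hη : η ∈ M) (hne : ξ ≠ η) {i : ℕ}
    (hi : i < u.length) : actW δ ξ (u.take i) ≠ actW δ η (u.take i) := fun heq =>
  (card_image_lt_of_ne_of_eq hξ hη hne heq).ne (card_wordImage_take hmin hi)

/-- If the images of `ξ, η` along a later prefix `u.take i` already lay in the image along an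
earlier prefix `u.take j`, the shorter word `u.take j ++ u.drop i` would do the job of `u`. -/
theorem isFranklPinSeq_prefixes {ξ η : Q} (hξ : ξ ∈ M) (hη : η ∈ M) (hne : ξ ≠ η)
    (hend : actW δ ξ u = actW δ η u ∨ (actW δ ξ u, actW δ η u) ∈ P) :
    IsFranklPinSeq #M (fun i : Fin u.length => wordImage δ M (u.take i))
      (fun i => actW δ ξ (u.take i)) (fun i => actW δ η (u.take i)) where
  card_eq i := card_wordImage_take hmin i.isLt
  mem i := ⟨actW_mem_wordImage δ hξ _, actW_mem_wordImage δ hη _⟩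
  not_mem_or i j hji := by
    rw [← not_and_or]
    rintro ⟨hx, hy⟩
    have hsplice : ∀ q, actW δ q (u.take i) ∈ wordImage δ M (u.take j) →
        actW δ q u ∈ wordImage δ M (u.take j ++ u.drop i) := fun q hq => by
      simpa only [wordImage_append, ← actW_append, List.take_append_drop] using
        mem_image_of_mem (actW δ · (u.drop i)) hq
    have hw : CompressesOrCoversPair δ P M (u.take j ++ u.drop i) := by
      rcases hend with heq | hpair
      · left
        rw [wordImage_append, ← card_wordImage_take hmin j.isLt]
        refine card_image_lt_of_ne_of_eq hx hy (actW_take_ne hmin hξ hη hne i.isLt) ?_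
        simpa only [← actW_append, List.take_append_drop] using heq
      · exact Or.inr ⟨_, hpair, hsplice ξ hx, hsplice η hy⟩
    have := hmin _ hw
    simp only [List.length_append, List.length_take, List.length_drop] at this
    omega

end Minimal

end Word

theorem compress_bound_with_pairs_general {Q A : Type*} [Fintype Q] [DecidableEq Q]
    (δ : Q → A → Q) (P : Finset (Q × Q)) (h p : ℕ)
    (hP : ∀ xy ∈ P, xy.1 ≠ xy.2 ∧ ∃ w : List A, actW δ xy.1 w = actW δ xy.2 w)
    (hh : ∀ xy ∈ P, ∃ w : List A, w.length ≤ h ∧ actW δ xy.1 w = actW δ xy.2 w)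
    (m : ℕ)
    (hp : ∃ (M : Fin p → Finset Q) (x y : Fin p → Q),
      (∀ i, (M i).card = m) ∧ (∀ i, x i ∈ M i ∧ y i ∈ M i) ∧
      (∀ i j, j < i → x i ∉ M j ∨ y i ∉ M j) ∧
      (∀ i, (x i, y i) ∈ P ∨ (y i, x i) ∈ P))
    (M : Finset Q) (hM : M.card = m)
    (hMc : ∃ w : List A, (M.image (fun q => actW δ q w)).card < M.card) :
    ∃ w : List A, (M.image (fun q => actW δ q w)).card < M.card ∧
      w.length + p ≤ Nat.choose (Fintype.card Q - m + 2) 2 + h := by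
  obtain ⟨Mp, xp, yp, hcard, hmem, hcond, hpP⟩ := hp
  obtain ⟨w₀, hw₀⟩ := hMc
  obtain ⟨u, hu, hmin⟩ := (measure (List.length (α := A))).wf.has_min
    {w | CompressesOrCoversPair δ P M w} ⟨w₀, Or.inl hw₀⟩
  replace hmin : ∀ w, CompressesOrCoversPair δ P M w → u.length ≤ w.length :=
    fun w hw => not_lt.mp (hmin w hw)
  obtain ⟨ξ, hξ, η, hη, hne, hend⟩ := hu.exists_pair fun z hz => (hP z hz).1
  have hlen : u.length + p ≤ (Fintype.card Q - m + 2).choose 2 := by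
    subst hM
    exact ((isFranklPinSeq_prefixes hmin hξ hη hne hend).append ⟨hcard, hmem, hcond⟩
      fun i j => not_mem_or_not_mem_wordImage_take hmin j.isLt (hpP i)).length_le
  rcases hu with hlt | ⟨z, hz, hz₁, hz₂⟩
  · exact ⟨u, hlt, by omega⟩
  · obtain ⟨v, hv, hzv⟩ := hh z hz
    refine ⟨u ++ v, ?_, by simp only [List.length_append]; omega⟩
    calc #(wordImage δ M (u ++ v)) = #((wordImage δ M u).image (actW δ · v)) := by
          rw [wordImage_append]
      _ < #(wordImage δ M u) := card_image_lt_of_ne_of_eq hz₁ hz₂ (hP z hz).1 hzv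
      _ ≤ #M := card_image_le

/-- Theorem 1 of the paper: the Frankl–Pin bound improved by the negative summand
p(P) - h(P), where h is the synchronizing height of the set P of compressible pairs
and p is the (maximal achievable) length of a Frankl–Pin sequence over P.
(Stated in the truncation-free form  |w| + p ≤ C(n-m+2,2) + h.) -/
theorem compress_bound_with_pairs {Q A : Type*} [Fintype Q] [DecidableEq Q]
    (δ : Q → A → Q) (P : Finset (Q × Q)) (h p : ℕ)
    (hP : ∀ xy ∈ P, xy.1 ≠ xy.2 ∧ ∃ w : List A, actW δ xy.1 w = actW δ xy.2 w)
    (hh : ∀ xy ∈ P, ∃ w : List A, w.length ≤ h ∧ actW δ xy.1 w = actW δ xy.2 w)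
    (m : ℕ) (hm : 2 ≤ m) (hmn : m ≤ Fintype.card Q)
    (hp : ∃ (M : Fin p → Finset Q) (x y : Fin p → Q),
      (∀ i, (M i).card = m) ∧ (∀ i, x i ∈ M i ∧ y i ∈ M i) ∧
      (∀ i j, j < i → x i ∉ M j ∨ y i ∉ M j) ∧
      (∀ i, (x i, y i) ∈ P ∨ (y i, x i) ∈ P))
    (M : Finset Q) (hM : M.card = m)
    (hMc : ∃ w : List A, (M.image (fun q => actW δ q w)).card < M.card) :
    ∃ w : List A, (M.image (fun q => actW δ q w)).card < M.card ∧
      w.length + p ≤ Nat.choose (Fintype.card Q - m + 2) 2 + h :=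
  compress_bound_with_pairs_general δ P h p hP hh m hp M hM hMc
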